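/- arXiv:1211.0750 — 4 statements merged into one kernel-verified Lean document; each statement's English description precedes it below -/
import Mathlib

section
/- Let G = (V,E) be a finite simple graph and f : V → ℝ an injective function. For a ∈ V let G_f(a) be the subgraph induced by {y ∈ V : f(y) < f(a)}. Then χ(G_f(a)) = Σ_{y ∈ V, f(y) < f(a)} i_f(y), where i_f(y) = 1 − χ(S⁻_f(y)) and S⁻_f(y) is the subgraph induced by the neighbors z of y with f(z) < f(y). -/
noncomputable def cfilter {V : Type*} (p : V → Prop) (s : Finset V) : Finset V :=
  @Finset.filter _ p (Classical.decPred p) s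

lemma cfilter_card_lt {V : Type*} {p : V → Prop} {s : Finset V} {x : V} (hx : x ∈ s)
    (hpx : ¬ p x) : (cfilter p s).card < s.card := by
  classical
  refine Finset.card_lt_card ?_
  unfold cfilter
  rw [Finset.filter_congr_decidable]
  exact (Finset.ssubset_iff_of_subset (Finset.filter_subset _ _)).mpr
    ⟨x, hx, fun h => hpx (Finset.mem_filter.mp h).2⟩

/-- Euler characteristic of the subgraph of `G` induced on the finite vertex set `s`:
the alternating sum `Σ_k (-1)^k v_k`, where `v_k` is the number of `(k+1)`-cliques of `G`
contained in `s`. -/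
noncomputable def echar {V : Type*} (G : SimpleGraph V) (s : Finset V) : ℤ :=
  ∑ k ∈ Finset.range (s.card + 1),
    (-1 : ℤ) ^ k *
      (Nat.card {t : Finset V // t ⊆ s ∧ t.card = k + 1 ∧ G.IsClique (t : Set V)} : ℤ)

/-- The down-sphere `S⁻_f(x)`: the subgraph induced by the neighbours `y` of `x`
with `f y < f x`. -/
noncomputable def sphereMinus {V : Type*} (G : SimpleGraph V) [Fintype V] (f : V → ℝ)
    (x : V) : Finset V :=
  cfilter (fun y => G.Adj x y ∧ f y < f x) Finset.univ

/-- The Poincaré–Hopf index `i_f(x) = 1 - χ(S⁻_f(x))`. -/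
noncomputable def pindex {V : Type*} (G : SimpleGraph V) [Fintype V] (f : V → ℝ) (x : V) : ℤ :=
  1 - echar G (sphereMinus G f x)

lemma mem_cfilter {V : Type*} {p : V → Prop} {s : Finset V} {x : V} :
    x ∈ cfilter p s ↔ x ∈ s ∧ p x :=
  @Finset.mem_filter V p (Classical.decPred p) s x

open Finset in
lemma echar_eq {V : Type*} (G : SimpleGraph V) (s : Finset V) :
    echar G s =
    ∑ t ∈ cfilter (fun t : Finset V => t.Nonempty ∧ G.IsClique (t : Set V)) s.powerset,
      (-1 : ℤ) ^ (t.card + 1) := by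
  classical
  unfold echar cfilter
  rw [Finset.filter_congr_decidable]
  rw [← Finset.sum_fiberwise_of_maps_to (g := fun t : Finset V => t.card - 1)
    (t := Finset.range (s.card + 1)) ?hmaps (fun t => (-1 : ℤ) ^ (t.card + 1))]
  case hmaps =>
    intro t ht
    simp only [Finset.mem_filter, Finset.mem_powerset] at ht
    have := Finset.card_le_card ht.1
    simp only [Finset.mem_range]
    omega
  refine Finset.sum_congr rfl fun k hk => ?_
  have hcard : (Nat.card {t : Finset V // t ⊆ s ∧ t.card = k + 1 ∧ G.IsClique (t : Set V)}) =
      ((s.powerset.filter (fun t : Finset V => (t.Nonempty ∧ G.IsClique (t : Set V)) ∧ t.card - 1 = k)).card) := by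
    rw [← Nat.card_eq_finsetCard]
    refine Nat.card_congr (Equiv.subtypeEquivRight ?_)
    intro t
    simp only [Finset.mem_coe, Finset.mem_filter, Finset.mem_powerset, ← Finset.card_pos]
    constructor
    · rintro ⟨h1, h2, h3⟩; exact ⟨h1, ⟨by omega, h3⟩, by omega⟩
    · rintro ⟨h1, ⟨h2, h3⟩, h4⟩; exact ⟨h1, by omega, h3⟩
  have key : ∑ t ∈ Finset.filter (fun i : Finset V => i.card - 1 = k)
      (Finset.filter (fun t : Finset V => t.Nonempty ∧ G.IsClique (t : Set V)) s.powerset),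
      (-1 : ℤ) ^ (t.card + 1) =
      ((Finset.filter (fun t : Finset V => (t.Nonempty ∧ G.IsClique (t : Set V)) ∧ t.card - 1 = k)
        s.powerset).card : ℤ) * (-1) ^ k := by
    rw [Finset.filter_filter]
    rw [Finset.sum_congr rfl (g := fun _ => ((-1 : ℤ)) ^ k) ?_]
    · rw [Finset.sum_const, nsmul_eq_mul]
    · intro t ht
      simp only [Finset.mem_filter, Finset.mem_powerset, ← Finset.card_pos] at ht
      have : t.card + 1 = k + 2 := by omega
      rw [this, pow_succ, pow_succ]
      ring
  rw [key, hcard]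
  ring

open Finset in
lemma echar_insert {V : Type*} [DecidableEq V] (G : SimpleGraph V) (s : Finset V) {x : V}
    (hx : x ∉ s) :
    echar G (insert x s) =
      echar G s + 1 - echar G (cfilter (fun y => G.Adj x y) s) := by
  classical
  rw [echar_eq, echar_eq, echar_eq]
  set ns := cfilter (fun y => G.Adj x y) s with hns
  have hnss : ns ⊆ s := by
    intro y hy
    exact (Finset.mem_filter.mp hy).1
  have hnsadj : ∀ y ∈ ns, G.Adj x y := by
    intro y hy
    exact (Finset.mem_filter.mp hy).2
  rw [← Finset.sum_filter_add_sum_filter_not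
    (cfilter (fun t : Finset V => t.Nonempty ∧ G.IsClique (t : Set V)) (insert x s).powerset)
    (fun t => x ∈ t) (fun t => (-1 : ℤ) ^ (t.card + 1))]
  have hnot : ((cfilter (fun t : Finset V => t.Nonempty ∧ G.IsClique (t : Set V))
        (insert x s).powerset).filter (fun t => x ∉ t)) =
      cfilter (fun t : Finset V => t.Nonempty ∧ G.IsClique (t : Set V)) s.powerset := by
    ext t
    simp only [cfilter, Finset.mem_filter, Finset.mem_powerset]
    constructor
    · rintro ⟨⟨h1, h2⟩, h3⟩
      exact ⟨fun y hy => (Finset.mem_insert.mp (h1 hy)).resolve_left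
        (fun h => h3 (h ▸ hy)), h2⟩
    · rintro ⟨h1, h2⟩
      exact ⟨⟨h1.trans (Finset.subset_insert _ _), h2⟩, fun h => hx (h1 h)⟩
  have hmem : ∑ t ∈ ((cfilter (fun t : Finset V => t.Nonempty ∧ G.IsClique (t : Set V))
        (insert x s).powerset).filter (fun t => x ∈ t)),
      (-1 : ℤ) ^ (t.card + 1) =
      ∑ u ∈ cfilter (fun u : Finset V => G.IsClique (u : Set V)) ns.powerset,
        (-1 : ℤ) ^ u.card := by
    refine Finset.sum_bij' (fun t _ => t.erase x) (fun u _ => insert x u) ?_ ?_ ?_ ?_ ?_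
    · intro t ht
      simp only [cfilter, Finset.mem_filter, Finset.mem_powerset] at ht ⊢
      obtain ⟨⟨hsub, hne, hcl⟩, hxt⟩ := ht
      refine ⟨fun y hy => ?_, hcl.subset (by simp [Finset.erase_subset])⟩
      have hyt := Finset.mem_of_mem_erase hy
      have hyx : y ≠ x := Finset.ne_of_mem_erase hy
      have hys : y ∈ s := (Finset.mem_insert.mp (hsub hyt)).resolve_left hyx
      exact Finset.mem_filter.mpr ⟨hys, (hcl (by simpa using hxt) (by simpa using hyt)
        (Ne.symm hyx))⟩
    · intro u hu
      simp only [cfilter, Finset.mem_filter, Finset.mem_powerset] at hu ⊢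
      obtain ⟨hsub, hcl⟩ := hu
      refine ⟨⟨?_, ⟨x, Finset.mem_insert_self _ _⟩, ?_⟩, Finset.mem_insert_self _ _⟩
      · exact Finset.insert_subset_insert _ (hsub.trans hnss)
      · rw [Finset.coe_insert, SimpleGraph.isClique_insert]
        exact ⟨hcl, fun b hb _ => hnsadj b (hsub hb)⟩
    · intro t ht
      simp only [Finset.mem_filter] at ht
      exact Finset.insert_erase ht.2
    · intro u hu
      simp only [cfilter, Finset.mem_filter, Finset.mem_powerset] at hu
      have hxu : x ∉ u := fun h => hx (hnss (hu.1 h))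
      exact Finset.erase_insert hxu
    · intro t ht
      simp only [Finset.mem_filter] at ht
      have h1 : (t.erase x).card + 1 = t.card := Finset.card_erase_add_one ht.2
      have h2 : t.card + 1 = (t.erase x).card + 2 := by omega
      rw [h2, pow_succ, pow_succ]
      ring
  have hsplit : ∑ u ∈ cfilter (fun u : Finset V => G.IsClique (u : Set V)) ns.powerset,
      (-1 : ℤ) ^ u.card =
      1 - ∑ t ∈ cfilter (fun t : Finset V => t.Nonempty ∧ G.IsClique (t : Set V)) ns.powerset,
        (-1 : ℤ) ^ (t.card + 1) := by
    rw [← Finset.sum_filter_add_sum_filter_not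
      (cfilter (fun u : Finset V => G.IsClique (u : Set V)) ns.powerset)
      (fun u => u.Nonempty) (fun u => (-1 : ℤ) ^ u.card)]
    have h1 : ((cfilter (fun u : Finset V => G.IsClique (u : Set V)) ns.powerset).filter
        (fun u => u.Nonempty)) =
        cfilter (fun t : Finset V => t.Nonempty ∧ G.IsClique (t : Set V)) ns.powerset := by
      ext u
      simp only [cfilter, Finset.mem_filter]
      tauto
    have h2 : ((cfilter (fun u : Finset V => G.IsClique (u : Set V)) ns.powerset).filter
        (fun u => ¬ u.Nonempty)) = {∅} := by
      ext u
      simp only [cfilter, Finset.mem_filter, Finset.mem_powerset,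
        Finset.not_nonempty_iff_eq_empty, Finset.mem_singleton]
      constructor
      · rintro ⟨_, h⟩; exact h
      · rintro rfl; simp
    rw [h1, h2, Finset.sum_singleton, Finset.card_empty, pow_zero]
    have h3 : ∑ t ∈ cfilter (fun t : Finset V => t.Nonempty ∧ G.IsClique (t : Set V))
        ns.powerset, (-1 : ℤ) ^ (t.card + 1) =
        ∑ t ∈ cfilter (fun t : Finset V => t.Nonempty ∧ G.IsClique (t : Set V))
        ns.powerset, -((-1 : ℤ) ^ t.card) := by
      refine Finset.sum_congr rfl fun t _ => ?_
      rw [pow_succ]; ring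
    rw [h3, Finset.sum_neg_distrib]
    ring
  rw [hnot, hmem, hsplit]
  abel

lemma echar_empty {V : Type*} (G : SimpleGraph V) : echar G (∅ : Finset V) = 0 := by
  classical
  rw [echar_eq]
  convert Finset.sum_empty
  ext t
  simp only [cfilter, Finset.mem_filter, Finset.mem_powerset, Finset.subset_empty,
    Finset.notMem_empty, iff_false]
  rintro ⟨rfl, ⟨h, _⟩⟩
  exact Finset.not_nonempty_empty h

lemma ph_main {V : Type*} [Fintype V] (G : SimpleGraph V) (f : V → ℝ)
    (hf : Function.Injective f) :
    ∀ n (s : Finset V), s.card = n → (∀ x ∈ s, ∀ y, f y < f x → y ∈ s) →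
      echar G s = ∑ y ∈ s, pindex G f y := by
  classical
  intro n
  induction n with
  | zero =>
    intro s hc _
    rw [Finset.card_eq_zero.mp hc]
    simp [echar_empty]
  | succ n ih =>
    intro s hc hdown
    have hne : s.Nonempty := by rw [← Finset.card_pos, hc]; omega
    obtain ⟨x, hxs, hmax⟩ := Finset.exists_max_image s f hne
    have herase : ∀ y, y ∈ s.erase x ↔ f y < f x := by
      intro y
      constructor
      · intro hy
        exact lt_of_le_of_ne (hmax y (Finset.mem_of_mem_erase hy))
          (fun h => (Finset.ne_of_mem_erase hy) (hf h))
      · intro hy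
        exact Finset.mem_erase.mpr ⟨fun h => absurd (h ▸ hy) (lt_irrefl _), hdown x hxs y hy⟩
    have hsphere : sphereMinus G f x = cfilter (fun y => G.Adj x y) (s.erase x) := by
      ext y
      unfold sphereMinus
      constructor
      · intro h
        obtain ⟨_, hadj, hlt⟩ := mem_cfilter.mp h
        exact mem_cfilter.mpr ⟨(herase y).mpr hlt, hadj⟩
      · intro h
        obtain ⟨hyE, hadj⟩ := mem_cfilter.mp h
        exact mem_cfilter.mpr ⟨Finset.mem_univ y, hadj, (herase y).mp hyE⟩
    have hdown' : ∀ z ∈ s.erase x, ∀ y, f y < f z → y ∈ s.erase x := by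
      intro z hz y hy
      exact (herase y).mpr (hy.trans ((herase z).mp hz))
    have hcard : (s.erase x).card = n := by
      rw [Finset.card_erase_of_mem hxs, hc]
      omega
    have hE := ih (s.erase x) hcard hdown'
    calc echar G s = echar G (insert x (s.erase x)) := by rw [Finset.insert_erase hxs]
      _ = echar G (s.erase x) + 1 - echar G (cfilter (fun y => G.Adj x y) (s.erase x)) :=
        echar_insert G _ (Finset.notMem_erase x s)
      _ = (∑ y ∈ s.erase x, pindex G f y) + pindex G f x := by
        rw [hE]; unfold pindex; rw [hsphere]; ring
      _ = ∑ y ∈ s, pindex G f y := by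
        rw [add_comm, Finset.add_sum_erase s _ hxs]

/-- For injective `f` and any vertex `a`, the Euler characteristic of the
subgraph induced by `{y | f y < f a}` is the sum of the indices `i_f(y)` over its vertices. -/
theorem poincare_hopf_filtration {V : Type*} [Fintype V] (G : SimpleGraph V) (f : V → ℝ)
    (hf : Function.Injective f) (a : V) :
    echar G (cfilter (fun y => f y < f a) Finset.univ) =
      ∑ y ∈ cfilter (fun y => f y < f a) Finset.univ, pindex G f y := by
  classical
  refine ph_main G f hf _ _ rfl ?_
  intro x hx y hy
  exact mem_cfilter.mpr ⟨Finset.mem_univ y, hy.trans (mem_cfilter.mp hx).2⟩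
end

section
/- Poincaré–Hopf for graphs: for any finite simple graph G = (V,E) and any injective function f : V → ℝ, the Euler characteristic satisfies χ(G) = Σ_{x ∈ V} i_f(x), where i_f(x) = 1 − χ(S⁻_f(x)). -/
open Finset

lemma echar_eq_sum {V : Type*} (G : SimpleGraph V) (s : Finset V) :
    echar G s = ∑ t ∈ cfilter (fun t : Finset V => t.Nonempty ∧ G.IsClique (t : Set V))
      s.powerset, (-1 : ℤ) ^ (t.card - 1) := by
  classical
  unfold echar cfilter
  rw [Finset.filter_congr_decidable]
  have hcard : ∀ k, (Nat.card {t : Finset V // t ⊆ s ∧ t.card = k + 1 ∧ G.IsClique (t : Set V)})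
      = (s.powerset.filter (fun t : Finset V => t.card = k + 1 ∧ G.IsClique (t : Set V))).card := by
    intro k
    rw [Nat.card_congr (Equiv.subtypeEquivRight (q := fun t =>
      t ∈ s.powerset.filter (fun t : Finset V => t.card = k + 1 ∧ G.IsClique (t : Set V)))
      (fun t => by simp [Finset.mem_filter, Finset.mem_powerset, and_assoc]))]
    exact Nat.card_eq_finsetCard _
  simp only [hcard]
  rw [← Finset.sum_fiberwise_of_maps_to (g := fun t : Finset V => t.card - 1)
    (t := Finset.range (s.card + 1))
    (fun t ht => by
      simp only [Finset.mem_filter, Finset.mem_powerset] at ht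
      have := Finset.card_le_card ht.1
      simp only [Finset.mem_range]; omega)]
  refine Finset.sum_congr rfl (fun k hk => ?_)
  have hset : (s.powerset.filter (fun t : Finset V => t.Nonempty ∧ G.IsClique (t : Set V))).filter
      (fun t => t.card - 1 = k)
      = s.powerset.filter (fun t : Finset V => t.card = k + 1 ∧ G.IsClique (t : Set V)) := by
    ext t
    simp only [Finset.mem_filter, Finset.mem_powerset, ← Finset.card_pos]
    constructor
    · rintro ⟨⟨h1, h2, h3⟩, h4⟩; exact ⟨h1, by omega, h3⟩
    · rintro ⟨h1, h2, h3⟩; exact ⟨⟨h1, by omega, h3⟩, by omega⟩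
  rw [hset, Finset.sum_congr rfl (fun t ht => ?_), Finset.sum_const, nsmul_eq_mul, mul_comm]
  simp only [Finset.mem_filter] at ht
  rw [ht.2.1]
  simp

lemma mem_sphereMinus {V : Type*} [Fintype V] (G : SimpleGraph V) (f : V → ℝ) (x y : V) :
    y ∈ sphereMinus G f x ↔ G.Adj x y ∧ f y < f x := by
  classical
  unfold sphereMinus cfilter
  rw [Finset.filter_congr_decidable]
  simp

lemma pindex_eq {V : Type*} [Fintype V] (G : SimpleGraph V) (f : V → ℝ) (x : V) :
    pindex G f x = ∑ t ∈ cfilter (fun t : Finset V => G.IsClique (t : Set V))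
      (sphereMinus G f x).powerset, (-1 : ℤ) ^ t.card := by
  classical
  unfold pindex cfilter
  rw [Finset.filter_congr_decidable, echar_eq_sum]
  unfold cfilter
  rw [Finset.filter_congr_decidable]
  set s := sphereMinus G f x
  have h1 : s.powerset.filter (fun t : Finset V => G.IsClique (t : Set V))
      = insert ∅ (s.powerset.filter (fun t : Finset V => t.Nonempty ∧ G.IsClique (t : Set V))) := by
    ext t
    simp only [Finset.mem_insert, Finset.mem_filter, Finset.mem_powerset]
    constructor
    · rintro ⟨hsub, hcl⟩
      rcases t.eq_empty_or_nonempty with h | h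
      · exact Or.inl h
      · exact Or.inr ⟨hsub, h, hcl⟩
    · rintro (rfl | ⟨hsub, _, hcl⟩)
      · exact ⟨Finset.empty_subset _, by simp⟩
      · exact ⟨hsub, hcl⟩
  rw [h1, Finset.sum_insert (by simp)]
  have h2 : ∀ t ∈ s.powerset.filter (fun t : Finset V => t.Nonempty ∧ G.IsClique (t : Set V)),
      (-1 : ℤ) ^ t.card = -(-1 : ℤ) ^ (t.card - 1) := by
    intro t ht
    simp only [Finset.mem_filter] at ht
    have : t.card - 1 + 1 = t.card := by
      have := Finset.card_pos.mpr ht.2.1; omega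
    calc (-1 : ℤ) ^ t.card = (-1) ^ (t.card - 1 + 1) := by rw [this]
      _ = -(-1 : ℤ) ^ (t.card - 1) := by rw [pow_succ]; ring
  rw [Finset.sum_congr rfl h2, Finset.sum_neg_distrib]
  simp only [Finset.card_empty, pow_zero]
  ring

noncomputable def topv {V : Type*} (f : V → ℝ) (t : Finset V) (h : t.Nonempty) : V :=
  (t.exists_max_image f h).choose

lemma topv_mem {V : Type*} (f : V → ℝ) (t : Finset V) (h : t.Nonempty) : topv f t h ∈ t :=
  (t.exists_max_image f h).choose_spec.1

lemma topv_max {V : Type*} (f : V → ℝ) (t : Finset V) (h : t.Nonempty) :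
    ∀ a ∈ t, f a ≤ f (topv f t h) :=
  (t.exists_max_image f h).choose_spec.2

/-- **Poincaré–Hopf.** For any finite simple graph `G` and injective
`f : V → ℝ`, `χ(G) = Σ_{x ∈ V} i_f(x)` with `i_f(x) = 1 - χ(S⁻_f(x))`. -/
theorem poincare_hopf {V : Type*} [Fintype V] (G : SimpleGraph V) (f : V → ℝ)
    (hf : Function.Injective f) :
    echar G Finset.univ = ∑ x ∈ Finset.univ, pindex G f x := by
  classical
  rw [echar_eq_sum]
  unfold cfilter
  rw [Finset.filter_congr_decidable]
  have hpi : ∀ x : V, pindex G f x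
      = ∑ t ∈ (sphereMinus G f x).powerset.filter (fun t : Finset V => G.IsClique (t : Set V)),
          (-1 : ℤ) ^ t.card := by
    intro x
    rw [pindex_eq]
    unfold cfilter
    rw [Finset.filter_congr_decidable]
  rw [Finset.sum_congr rfl (fun x _ => hpi x), Finset.sum_sigma']
  set A := (Finset.univ : Finset V).powerset.filter
    (fun t : Finset V => t.Nonempty ∧ G.IsClique (t : Set V)) with hA
  set B := (Finset.univ : Finset V).sigma
    (fun x => (sphereMinus G f x).powerset.filter (fun t : Finset V => G.IsClique (t : Set V)))
    with hB
  have hmemA : ∀ {t : Finset V}, t ∈ A ↔ t.Nonempty ∧ G.IsClique (t : Set V) := by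
    intro t; simp [hA]
  have hmemB : ∀ {p : (_ : V) × Finset V}, p ∈ B ↔
      p.2 ⊆ sphereMinus G f p.1 ∧ G.IsClique (p.2 : Set V) := by
    intro p; simp [hB, Finset.mem_sigma, Finset.mem_powerset]
  refine Finset.sum_bij'
    (i := fun t ht => ⟨topv f t (hmemA.mp ht).1, t.erase (topv f t (hmemA.mp ht).1)⟩)
    (j := fun p hp => insert p.1 p.2) ?_ ?_ ?_ ?_ ?_
  · -- i maps into B
    intro t ht
    obtain ⟨hne, hcl⟩ := hmemA.mp ht
    set x := topv f t hne with hx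
    refine hmemB.mpr ⟨?_, hcl.subset (by simp [Finset.coe_erase, Set.diff_subset])⟩
    intro y hy
    rw [Finset.mem_erase] at hy
    obtain ⟨hyx, hyt⟩ := hy
    rw [mem_sphereMinus]
    have hadj : G.Adj x y := hcl (topv_mem f t hne) hyt (fun h => hyx h.symm)
    exact ⟨hadj, lt_of_le_of_ne (topv_max f t hne y hyt) (fun h => hyx (hf h))⟩
  · -- j maps into A
    rintro ⟨x, t⟩ hp
    obtain ⟨hsub, hcl⟩ := hmemB.mp hp
    refine hmemA.mpr ⟨Finset.insert_nonempty _ _, ?_⟩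
    rw [Finset.coe_insert]
    refine hcl.insert (fun b hb _ => ?_)
    exact ((mem_sphereMinus G f x b).mp (hsub hb)).1
  · -- left inverse
    intro t ht
    exact Finset.insert_erase (topv_mem f t (hmemA.mp ht).1)
  · -- right inverse
    rintro ⟨x, t⟩ hp
    obtain ⟨hsub, hcl⟩ := hmemB.mp hp
    have hxt : x ∉ t := fun h => by
      have := ((mem_sphereMinus G f x x).mp (hsub h)).2
      exact lt_irrefl _ this
    have hne : (insert x t).Nonempty := Finset.insert_nonempty _ _
    have htop : ∀ h : (insert x t).Nonempty, topv f (insert x t) h = x := by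
      intro h
      have hm := topv_mem f (insert x t) h
      rw [Finset.mem_insert] at hm
      rcases hm with h' | h'
      · exact h'
      · exfalso
        have h1 : f (topv f (insert x t) h) < f x :=
          ((mem_sphereMinus G f x _).mp (hsub h')).2
        have h2 : f x ≤ f (topv f (insert x t) h) :=
          topv_max f (insert x t) h x (Finset.mem_insert_self _ _)
        linarith
    have := htop (hmemA.mp ((by
      refine hmemA.mpr ⟨Finset.insert_nonempty _ _, ?_⟩
      rw [Finset.coe_insert]
      exact hcl.insert (fun b hb _ => ((mem_sphereMinus G f x b).mp (hsub hb)).1) : insert x t ∈ A))).1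
    simp only [this]
    rw [Finset.erase_insert hxt]
  · -- values agree
    intro t ht
    rw [Finset.card_erase_of_mem (topv_mem f t (hmemA.mp ht).1)]
end

section
/- Euler characteristic is a homotopy invariant of finite simple graphs: if G and H are homotopic (connected by a chain of pyramid extensions over contractible subgraphs and their inverses), then χ(G) = χ(H). -/
/-- Ivashchenko contractibility (in itself) of the subgraph of `G` induced on the finite
vertex set `s`: either `s` is a single vertex, or there is an injective function `f` on `s`
such that for every non-minimal vertex `x` the down-sphere `S⁻_f(x)` (the neighbours of `x`
in `s` with smaller `f`-value) is contractible in itself. -/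
def Contractible {V : Type*} (G : SimpleGraph V) (s : Finset V) : Prop :=
  s.card = 1 ∨ (1 < s.card ∧ ∃ f : V → ℝ, Set.InjOn f ↑s ∧
    ∀ x ∈ s, (∃ y ∈ s, f y < f x) →
      Contractible G (cfilter (fun y => G.Adj x y ∧ f y < f x) s))
termination_by s.card
decreasing_by
  rename_i hx hlt
  exact cfilter_card_lt hx (fun h => G.loopless.irrefl x h.1)

/-- A finite simple graph with vertices labelled by natural numbers. -/
structure FGraph where
  verts : Finset ℕ
  graph : SimpleGraph ℕ
  support : ∀ x y, graph.Adj x y → x ∈ verts ∧ y ∈ verts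

/-- An elementary expansion: a pyramid extension adding one new vertex joined to exactly
the vertices of a subgraph `H` that is contractible in itself. -/
def Expansion (A B : FGraph) : Prop :=
  ∃ x ∉ A.verts, ∃ H : Finset ℕ, H ⊆ A.verts ∧ Contractible A.graph H ∧
    B.verts = insert x A.verts ∧
    ∀ a b, B.graph.Adj a b ↔
      A.graph.Adj a b ∨ (a = x ∧ b ∈ H) ∨ (b = x ∧ a ∈ H)

/-- An elementary homotopy step: a pyramid extension over a contractible subgraph, or its
inverse (removal of a vertex whose unit sphere is contractible in itself). -/
def HomotopyStep (A B : FGraph) : Prop := Expansion A B ∨ Expansion B A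

/-- Two finite simple graphs are homotopic if they are connected by a finite chain of
elementary homotopy steps. -/
def Homotopic : FGraph → FGraph → Prop := Relation.ReflTransGen HomotopyStep

lemma cfilter_congr {V : Type*} {p q : V → Prop} {s : Finset V} (h : ∀ x ∈ s, p x ↔ q x) :
    cfilter p s = cfilter q s := by
  ext x
  simp only [mem_cfilter]
  exact and_congr_right (h x)

lemma cfilter_erase {V : Type*} [DecidableEq V] {p : V → Prop} {s : Finset V} {x : V}
    (hx : ¬ p x) : cfilter p (s.erase x) = cfilter p s := by
  ext y
  simp only [mem_cfilter, Finset.mem_erase]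
  exact ⟨fun h => ⟨h.1.2, h.2⟩, fun h => ⟨⟨fun hyx => hx (hyx ▸ h.2), h.1⟩, h.2⟩⟩

namespace SimpleGraph

variable {V : Type*} (G : SimpleGraph V)

noncomputable def cliquesIn (s : Finset V) : Finset (Finset V) :=
  cfilter (fun t => G.IsClique (t : Set V)) s.powerset

/-- `χ - 1`: the empty clique is counted as a simplex of dimension `-1`. -/
noncomputable def reducedEchar (s : Finset V) : ℤ :=
  ∑ t ∈ G.cliquesIn s, (-1) ^ (t.card + 1)

noncomputable def downSphere (f : V → ℝ) (s : Finset V) (x : V) : Finset V :=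
  cfilter (fun y => G.Adj x y ∧ f y < f x) s

variable {G} in
@[simp]
lemma mem_cliquesIn {s t : Finset V} :
    t ∈ G.cliquesIn s ↔ t ⊆ s ∧ G.IsClique (t : Set V) := by
  rw [cliquesIn, mem_cfilter, Finset.mem_powerset]

lemma card_cliquesIn_filter_card (s : Finset V) (k : ℕ) :
    ((G.cliquesIn s).filter (·.card = k)).card =
      Nat.card {t : Finset V // t ⊆ s ∧ t.card = k ∧ G.IsClique (t : Set V)} := by
  rw [← Nat.card_eq_finsetCard]
  exact Nat.card_congr <| Equiv.subtypeEquivRight fun t => by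
    simp only [Finset.mem_filter, mem_cliquesIn]; tauto

lemma echar_eq_reducedEchar_add_one (s : Finset V) : echar G s = G.reducedEchar s + 1 := by
  have hcard : ∀ t ∈ G.cliquesIn s, t.card ∈ Finset.range (s.card + 2) := fun t ht =>
    Finset.mem_range.mpr (Nat.lt_succ_of_le (Nat.le_succ_of_le
      (Finset.card_le_card (mem_cliquesIn.mp ht).1)))
  have hempty : ((G.cliquesIn s).filter (·.card = 0)) = {∅} := by
    ext t; simp +contextual [Finset.card_eq_zero]
  rw [reducedEchar, ← Finset.sum_fiberwise_of_maps_to' hcard (fun k => (-1 : ℤ) ^ (k + 1)),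
    Finset.sum_range_succ', echar]
  simp only [Finset.sum_const, ← card_cliquesIn_filter_card, hempty, pow_succ]
  simp [mul_comm]

variable {G}

lemma reducedEchar_congr {G' : SimpleGraph V} {s : Finset V}
    (h : ∀ a ∈ s, ∀ b ∈ s, G.Adj a b ↔ G'.Adj a b) :
    G.reducedEchar s = G'.reducedEchar s := by
  rw [reducedEchar, reducedEchar]
  congr 1
  ext t
  simp only [mem_cliquesIn, and_congr_right_iff]
  exact fun hts => forall₂_congr fun a ha => forall₂_congr fun b hb =>
    imp_congr_right fun _ => h a (hts ha) b (hts hb)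

variable [DecidableEq V]

lemma cliquesIn_insert {s : Finset V} {x : V} (hx : x ∉ s) :
    G.cliquesIn (insert x s) =
      G.cliquesIn s ∪ (G.cliquesIn (cfilter (fun y => G.Adj x y) s)).image (insert x) := by
  ext t
  simp only [Finset.mem_union, Finset.mem_image, mem_cliquesIn]
  by_cases hxt : x ∈ t
  · obtain ⟨u, hxu, rfl⟩ : ∃ u, x ∉ u ∧ t = insert x u :=
      ⟨t.erase x, Finset.notMem_erase x t, (Finset.insert_erase hxt).symm⟩
    have hleft : ¬ (insert x u ⊆ s ∧ G.IsClique ((insert x u : Finset V) : Set V)) :=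
      fun h => hx (h.1 (Finset.mem_insert_self x u))
    have hright : (∃ v, (v ⊆ cfilter (fun y => G.Adj x y) s ∧ G.IsClique (v : Set V)) ∧
        insert x v = insert x u) ↔
          u ⊆ cfilter (fun y => G.Adj x y) s ∧ G.IsClique (u : Set V) := by
      constructor
      · rintro ⟨v, hv, hvu⟩
        have hxv : x ∉ v := fun h => hx (mem_cfilter.mp (hv.1 h)).1
        rwa [← Finset.erase_insert hxv, hvu, Finset.erase_insert hxu] at hv
      · exact fun hu => ⟨u, hu, rfl⟩
    rw [or_iff_right hleft, hright, Finset.coe_insert, isClique_insert_of_notMem hxu,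
      Finset.insert_subset_insert_iff hxu]
    simp only [Finset.subset_iff, mem_cfilter]
    grind
  · have hright : ¬ ∃ v, (v ⊆ cfilter (fun y => G.Adj x y) s ∧ G.IsClique (v : Set V)) ∧
        insert x v = t := by
      rintro ⟨v, -, rfl⟩
      exact hxt (Finset.mem_insert_self x v)
    rw [or_iff_left hright, Finset.subset_insert_iff_of_notMem hxt]

lemma reducedEchar_insert {s : Finset V} {x : V} (hx : x ∉ s) :
    G.reducedEchar (insert x s) =
      G.reducedEchar s - G.reducedEchar (cfilter (fun y => G.Adj x y) s) := by
  have hxS {u : Finset V} (hu : u ∈ G.cliquesIn (cfilter (fun y => G.Adj x y) s)) : x ∉ u :=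
    fun h => hx (mem_cfilter.mp ((mem_cliquesIn.mp hu).1 h)).1
  have hdisj : Disjoint (G.cliquesIn s)
      ((G.cliquesIn (cfilter (fun y => G.Adj x y) s)).image (insert x)) := by
    simp only [Finset.disjoint_right, Finset.mem_image, mem_cliquesIn]
    rintro _ ⟨u, -, rfl⟩ ⟨hus, -⟩
    exact hx (hus (Finset.mem_insert_self x u))
  have hinj : Set.InjOn (insert x)
      (G.cliquesIn (cfilter (fun y => G.Adj x y) s) : Set (Finset V)) :=
    fun u hu v hv huv => by
      rw [← Finset.erase_insert (hxS hu), ← Finset.erase_insert (hxS hv)]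
      exact congrArg (·.erase x) huv
  rw [reducedEchar, cliquesIn_insert hx, Finset.sum_union hdisj, Finset.sum_image hinj,
    sub_eq_add_neg, reducedEchar, reducedEchar, ← Finset.sum_neg_distrib]
  congr 1
  refine Finset.sum_congr rfl fun u hu => ?_
  rw [Finset.card_insert_of_notMem (hxS hu), pow_succ]
  ring

lemma reducedEchar_singleton (a : V) : G.reducedEchar {a} = 0 := by
  have hnbrs : cfilter (fun y => G.Adj a y) (∅ : Finset V) = ∅ := by
    ext y
    simp [mem_cfilter]
  rw [← insert_empty_eq, reducedEchar_insert (Finset.notMem_empty a), hnbrs, sub_self]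

lemma downSphere_erase_of_le {s : Finset V} {f : V → ℝ} {x y : V} (hxy : f y ≤ f x) :
    G.downSphere f (s.erase x) y = G.downSphere f s y :=
  cfilter_erase fun h => (h.2.trans_le hxy).false

lemma cfilter_adj_erase_eq_downSphere {s : Finset V} {f : V → ℝ} (hinj : Set.InjOn f s)
    {x : V} (hxs : x ∈ s) (hmax : ∀ y ∈ s, f y ≤ f x) :
    cfilter (fun y => G.Adj x y) (s.erase x) = G.downSphere f s x := by
  rw [downSphere,
    ← cfilter_erase (p := fun y => G.Adj x y ∧ f y < f x) fun h => lt_irrefl _ h.2]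
  refine cfilter_congr fun y hy => (and_iff_left_of_imp fun _ => ?_).symm
  obtain ⟨hyx, hys⟩ := Finset.mem_erase.mp hy
  exact (hmax y hys).lt_of_ne fun h => hyx (hinj hys hxs h)

lemma contractible_erase_of_isMax {s : Finset V} (hs : 1 < s.card) {f : V → ℝ}
    (hinj : Set.InjOn f s)
    (hf : ∀ y ∈ s, (∃ z ∈ s, f z < f y) → Contractible G (G.downSphere f s y))
    {x : V} (hxs : x ∈ s) (hmax : ∀ y ∈ s, f y ≤ f x) : Contractible G (s.erase x) := by
  have hcard : (s.erase x).card = s.card - 1 := Finset.card_erase_of_mem hxs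
  rw [Contractible]
  rcases (show (s.erase x).card = 1 ∨ 1 < (s.erase x).card by omega) with h | h
  · exact Or.inl h
  refine Or.inr ⟨h, f, hinj.mono (Finset.erase_subset x s), fun y hy ⟨z, hz, hzy⟩ => ?_⟩
  have hys := Finset.mem_of_mem_erase hy
  have := hf y hys ⟨z, Finset.mem_of_mem_erase hz, hzy⟩
  rwa [← downSphere_erase_of_le (hmax y hys)] at this

theorem _root_.Contractible.reducedEchar_eq_zero {s : Finset V} (h : Contractible G s) :
    G.reducedEchar s = 0 := by
  induction s using Finset.strongInduction with
  | H s ih =>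
  rw [Contractible] at h
  obtain h | ⟨hs, f, hinj, hf⟩ := h
  · obtain ⟨a, rfl⟩ := Finset.card_eq_one.mp h
    exact reducedEchar_singleton a
  obtain ⟨x, hxs, hmax⟩ := s.exists_max_image f (Finset.card_pos.mp (by omega))
  obtain ⟨z, hzs, hzx⟩ := Finset.exists_mem_ne hs x
  have hdown : Contractible G (G.downSphere f s x) :=
    hf x hxs ⟨z, hzs, (hmax z hzs).lt_of_ne fun h => hzx (hinj hzs hxs h)⟩
  have hdown_ssubset : G.downSphere f s x ⊂ s := by
    refine Finset.ssubset_of_subset_of_ssubset (fun y hy => ?_) (Finset.erase_ssubset hxs)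
    obtain ⟨hys, hxy, -⟩ := mem_cfilter.mp hy
    exact Finset.mem_erase.mpr ⟨hxy.ne', hys⟩
  rw [← Finset.insert_erase hxs, reducedEchar_insert (Finset.notMem_erase x s),
    cfilter_adj_erase_eq_downSphere hinj hxs hmax,
    ih _ (Finset.erase_ssubset hxs) (contractible_erase_of_isMax hs hinj hf hxs hmax),
    ih _ hdown_ssubset hdown, sub_self]

end SimpleGraph

open SimpleGraph

lemma Expansion.echar_eq {A B : FGraph} (h : Expansion A B) :
    echar B.graph B.verts = echar A.graph A.verts := by
  obtain ⟨x, hx, H, hHA, hH, hBv, hadj⟩ := h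
  have hagree : ∀ a ∈ A.verts, ∀ b ∈ A.verts, B.graph.Adj a b ↔ A.graph.Adj a b := by
    intro a ha b hb
    rw [hadj]
    grind
  have hnbrs : cfilter (fun y => B.graph.Adj x y) A.verts = H := by
    ext y
    rw [mem_cfilter, hadj]
    have hsupport := A.support x y
    grind
  rw [echar_eq_reducedEchar_add_one, echar_eq_reducedEchar_add_one, hBv, reducedEchar_insert hx,
    hnbrs, reducedEchar_congr fun a ha b hb => hagree a (hHA ha) b (hHA hb),
    hH.reducedEchar_eq_zero, sub_zero, reducedEchar_congr hagree]

/-- Euler characteristic is a homotopy invariant: homotopic graphs have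
the same Euler characteristic. -/
theorem euler_homotopy_invariant (A B : FGraph) (h : Homotopic A B) :
    echar A.graph A.verts = echar B.graph B.verts := by
  induction h with
  | refl => rfl
  | tail _ hstep ih => exact ih.trans (hstep.elim (fun h => h.echar_eq.symm) Expansion.echar_eq)
end

section
/- The exterior product on discrete differential forms is super-anticommutative: for a p-form f and a q-form g on a finite simple graph, f ∧ g = (−1)^{pq} g ∧ f. -/
variable {V : Type*}

/-- A tuple of vertices spans a clique: distinct entries are pairwise adjacent. -/
def IsCliqueTuple (G : SimpleGraph V) {m : ℕ} (x : Fin m → V) : Prop :=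
  Function.Injective x ∧ ∀ i j, i ≠ j → G.Adj (x i) (x j)

/-- `(p,q)`-shuffles: permutations of `Fin (p+q)` that are increasing on the first `p`
and on the last `q` positions. -/
noncomputable def shuffles (p q : ℕ) : Finset (Equiv.Perm (Fin (p + q))) :=
  @Finset.filter _ (fun σ =>
      (∀ i j : Fin (p + q), i < j → (i : ℕ) < p → (j : ℕ) < p → σ i < σ j) ∧
      (∀ i j : Fin (p + q), i < j → p ≤ (i : ℕ) → p ≤ (j : ℕ) → σ i < σ j))
    (Classical.decPred _) Finset.univ

/-- The pre-exterior product `f ∧' g` of a `p`-form and a `q`-form, centered at `x 0`. -/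
noncomputable def preWedge {p q : ℕ} (f : (Fin (p + 1) → V) → ℝ) (g : (Fin (q + 1) → V) → ℝ)
    (x : Fin (p + q + 1) → V) : ℝ :=
  ∑ σ ∈ shuffles p q,
    ((Equiv.Perm.sign σ : ℤ) : ℝ) *
      f (Fin.cons (x 0) (fun i : Fin p => x (σ (Fin.castAdd q i)).succ)) *
      g (Fin.cons (x 0) (fun j : Fin q => x (σ (Fin.natAdd p j)).succ))

/-- The exterior product `f ∧ g`: the antisymmetrization of `f ∧' g`, averaging over all
cyclic rotations of the `p+q+1` arguments with signs. -/
noncomputable def wedge {p q : ℕ} (f : (Fin (p + 1) → V) → ℝ) (g : (Fin (q + 1) → V) → ℝ)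
    (x : Fin (p + q + 1) → V) : ℝ :=
  (1 / (p + q + 1 : ℝ)) *
    ∑ m ∈ Finset.range (p + q + 1),
      ((Equiv.Perm.sign ((finRotate (p + q + 1)) ^ m) : ℤ) : ℝ) *
        preWedge f g (x ∘ ((finRotate (p + q + 1)) ^ m))

/-!
Already the pre-wedge product satisfies `f ∧' g = (-1)^{pq} g ∧' f`, so the identity passes
through the rotation average term by term. Precomposing a permutation of `Fin (p + q)` with the
block swap of `Fin (q + p)` maps `(p, q)`-shuffles bijectively onto `(q, p)`-shuffles and
exchanges the arguments fed to `f` and to `g`. The block swap is the `p`-th power of the cyclic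
rotation of `Fin (q + p)`, so its sign is `(-1)^((p + q - 1) p) = (-1)^{pq}`.
-/

open Equiv Equiv.Perm

open Fin.NatCast in
lemma finRotate_pow_apply {n : ℕ} [NeZero n] (m : ℕ) (i : Fin n) :
    (finRotate n ^ m) i = i + (m : Fin n) := by
  induction m with
  | zero => simp
  | succ m ih => rw [pow_succ', Perm.mul_apply, ih, finRotate_apply, Nat.cast_succ, add_assoc]

open Fin.NatCast in
lemma finRotate_pow_apply_val (n m : ℕ) (i : Fin n) :
    ((finRotate n ^ m) i : ℕ) = (i + m) % n := by
  have : NeZero n := ⟨i.pos.ne'⟩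
  rw [finRotate_pow_apply, Fin.val_add, Fin.val_natCast, Nat.add_mod_mod]

def blockSwap (p q : ℕ) : Perm (Fin (q + p)) :=
  finAddFlip.trans (finCongr (Nat.add_comm p q))

lemma blockSwap_apply_castAdd (p q : ℕ) (j : Fin q) :
    blockSwap p q (Fin.castAdd p j) = Fin.cast (Nat.add_comm p q) (Fin.natAdd p j) := by
  simp [blockSwap]

lemma blockSwap_apply_natAdd (p q : ℕ) (i : Fin p) :
    blockSwap p q (Fin.natAdd q i) = Fin.cast (Nat.add_comm p q) (Fin.castAdd q i) := by
  simp [blockSwap]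

lemma blockSwap_eq_finRotate_pow (p q : ℕ) : blockSwap p q = finRotate (q + p) ^ p := by
  ext k
  rw [finRotate_pow_apply_val]
  induction k using Fin.addCases with
  | left j =>
    rw [blockSwap_apply_castAdd, Fin.val_cast, Fin.val_natAdd, Fin.val_castAdd,
      Nat.mod_eq_of_lt (by omega)]
    omega
  | right i =>
    rw [blockSwap_apply_natAdd, Fin.val_cast, Fin.val_natAdd, Fin.val_castAdd,
      Nat.add_right_comm, Nat.add_mod_left, Nat.mod_eq_of_lt (by omega)]

lemma sign_blockSwap (p q : ℕ) : sign (blockSwap p q) = (-1) ^ (p * q) := by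
  have hexp : (q + p - 1) * p = p * q + p * (p - 1) := by
    cases p with
    | zero => simp
    | succ p => simp only [← Nat.add_assoc, Nat.add_sub_cancel]; ring
  rw [blockSwap_eq_finRotate_pow, map_pow, sign_finRotate, ← pow_mul, hexp, pow_add,
    (Nat.even_mul_pred_self p).neg_one_pow, mul_one]

lemma mem_shuffles_iff {p q : ℕ} (σ : Perm (Fin (p + q))) :
    σ ∈ shuffles p q ↔
      StrictMono (σ ∘ Fin.castAdd q) ∧ StrictMono (σ ∘ Fin.natAdd p) := by
  simp only [shuffles, Finset.mem_filter, Finset.mem_univ, true_and]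
  refine and_congr ⟨fun h a b hab => h _ _ hab a.isLt b.isLt, fun h i j hij hi hj => ?_⟩
    ⟨fun h a b hab => h _ _ (by simpa using hab) (by simp) (by simp), fun h i j hij hi hj => ?_⟩
  · exact h (a := ⟨i, hi⟩) (b := ⟨j, hj⟩) hij
  · have := h (a := ⟨i - p, by omega⟩) (b := ⟨j - p, by omega⟩)
      (by simp [Fin.lt_def]; omega)
    simp only [Function.comp_apply, Fin.natAdd_mk, Nat.add_sub_cancel' hi,
      Nat.add_sub_cancel' hj] at this
    exact this

def shuffleSwap (p q : ℕ) : Perm (Fin (p + q)) ≃ Perm (Fin (q + p)) :=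
  (finCongr (Nat.add_comm p q)).permCongr.trans (Equiv.mulRight (blockSwap p q))

lemma shuffleSwap_apply_castAdd {p q : ℕ} (σ : Perm (Fin (p + q))) (j : Fin q) :
    shuffleSwap p q σ (Fin.castAdd p j) = Fin.cast (Nat.add_comm p q) (σ (Fin.natAdd p j)) := by
  simp [shuffleSwap, blockSwap_apply_castAdd]

lemma shuffleSwap_apply_natAdd {p q : ℕ} (σ : Perm (Fin (p + q))) (i : Fin p) :
    shuffleSwap p q σ (Fin.natAdd q i) = Fin.cast (Nat.add_comm p q) (σ (Fin.castAdd q i)) := by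
  simp [shuffleSwap, blockSwap_apply_natAdd]

lemma sign_shuffleSwap {p q : ℕ} (σ : Perm (Fin (p + q))) :
    sign (shuffleSwap p q σ) = sign σ * (-1) ^ (p * q) := by
  simp [shuffleSwap, sign_permCongr, sign_blockSwap]

lemma shuffleSwap_mem_shuffles_iff {p q : ℕ} (σ : Perm (Fin (p + q))) :
    shuffleSwap p q σ ∈ shuffles q p ↔ σ ∈ shuffles p q := by
  have hcast {n m : ℕ} (h : n = m) {k : ℕ} (φ : Fin k → Fin n) :
      StrictMono (Fin.cast h ∘ φ) ↔ StrictMono φ := by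
    simp [StrictMono, Fin.cast_lt_cast]
  have hleft : shuffleSwap p q σ ∘ Fin.castAdd p =
      Fin.cast (Nat.add_comm p q) ∘ σ ∘ Fin.natAdd p := funext (shuffleSwap_apply_castAdd σ)
  have hright : shuffleSwap p q σ ∘ Fin.natAdd q =
      Fin.cast (Nat.add_comm p q) ∘ σ ∘ Fin.castAdd q := funext (shuffleSwap_apply_natAdd σ)
  rw [mem_shuffles_iff, mem_shuffles_iff, hleft, hright, hcast, hcast, and_comm]

lemma preWedge_comm {p q : ℕ} (f : (Fin (p + 1) → V) → ℝ) (g : (Fin (q + 1) → V) → ℝ)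
    (x : Fin (p + q + 1) → V) (h : q + p + 1 = p + q + 1) :
    preWedge f g x = (-1 : ℝ) ^ (p * q) * preWedge g f (fun i => x (Fin.cast h i)) := by
  have hsucc (k : Fin (p + q)) : Fin.cast h (Fin.cast (Nat.add_comm p q) k).succ = k.succ :=
    Fin.ext (by simp)
  have hzero : Fin.cast h 0 = 0 := rfl
  rw [preWedge, preWedge, Finset.mul_sum]
  refine Finset.sum_equiv (shuffleSwap p q) (fun σ => (shuffleSwap_mem_shuffles_iff σ).symm)
    (fun σ _ => ?_)
  simp only [shuffleSwap_apply_castAdd, shuffleSwap_apply_natAdd, sign_shuffleSwap, hsucc, hzero]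
  push_cast
  ring_nf
  rw [mul_comm (p * q) 2, pow_mul, neg_one_sq, one_pow, mul_one]

-- Written with `⇑(finRotate n) ^ m` (a pointwise power), which is how `x ∘ (finRotate n ^ m)`
-- elaborates inside `wedge`.
lemma comp_finRotate_pow_comp_cast {a b : ℕ} (h : b + 1 = a + 1) (x : Fin (a + 1) → V)
    (m : ℕ) :
    (fun i => (x ∘ (⇑(finRotate (a + 1)) ^ m)) (Fin.cast h i)) =
      (fun i => x (Fin.cast h i)) ∘ (⇑(finRotate (b + 1)) ^ m) := by
  obtain rfl : b = a := by omega
  rfl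

theorem wedge_comm {p q : ℕ}
    (f : (Fin (p + 1) → V) → ℝ) (g : (Fin (q + 1) → V) → ℝ)
    (x : Fin (p + q + 1) → V) :
    wedge f g x = (-1 : ℝ) ^ (p * q) * wedge g f (fun i : Fin (q + p + 1) => x (Fin.cast (by omega) i)) := by
  have h : q + p + 1 = p + q + 1 := by omega
  rw [wedge, wedge, show Finset.range (q + p + 1) = Finset.range (p + q + 1) by rw [h],
    Finset.mul_sum, Finset.mul_sum, Finset.mul_sum]
  refine Finset.sum_congr rfl fun m _ => ?_
  have hsign : sign (finRotate (p + q + 1) ^ m) = sign (finRotate (q + p + 1) ^ m) := by rw [h]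
  rw [preWedge_comm f g _ h, comp_finRotate_pow_comp_cast h, hsign]
  ring
end
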